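/- Let L ⊆ K be fields and suppose K/L is finitely generated as a field extension. Then the relative algebraic closure of L((t)) in K((t)) equals L̃((t)), where L̃ is the relative algebraic closure of L in K. -/

import Mathlib

/-!
If the coefficients of `f` are algebraic over `L`, they lie in the relative algebraic closure
`L̃` of `L` in `K`. It is finite over `L`: for a transcendence basis `s` of `K/L`, the extension
`K/L(s)` is finite, and `L`-linearly independent algebraic elements stay linearly independent
over `L(s)`. Hence `L̃((t))` is a finite `L((t))`-module and `f ∈ L̃((t))` is integral.

Conversely, the terms of lowest order in a polynomial relation for an algebraic `f ≠ 0` give a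
nontrivial relation over `L` for its leading coefficient. If some coefficient of `f` were
transcendental, let `f_m` be the first one: removing from `f` its truncation below `m`, a
Laurent polynomial with algebraic coefficients, leaves an algebraic series with leading
coefficient `f_m`.
-/

/-- The ring homomorphism between Laurent series fields induced by applying a ring
homomorphism to each coefficient. -/
noncomputable def LaurentSeries.mapRingHom {R S : Type*} [CommRing R] [CommRing S]
    (f : R →+* S) : LaurentSeries R →+* LaurentSeries S where
  toFun x := x.map f
  map_one' := HahnSeries.map_one f.toMonoidWithZeroHom
  map_mul' x y := HahnSeries.map_mul (f : R →ₙ+* S)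
  map_zero' := by ext; simp
  map_add' x y := HahnSeries.map_add (f : R →+ S)

open IntermediateField

theorem AlgebraicIndependent.linearIndependent_algebraAdjoin {ι κ F K : Type*} [Field F]
    [Field K] [Algebra F K] {x : ι → K} (hx : AlgebraicIndependent F x) {v : κ → K}
    (hv : ∀ i, IsAlgebraic F (v i)) (hli : LinearIndependent F v) :
    LinearIndependent (Algebra.adjoin F (Set.range x)) v := by
  set A := algebraicClosure F K
  -- Over `A`, which contains every `v j`, a relation `∑ g j • v j = 0` is a polynomial identity
  -- in `x`, and `x` is still algebraically independent over `A`.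
  have hxA : AlgebraicIndependent A x := hx.extendScalars A
  rw [linearIndependent_iff']
  intro t g hg i hi
  have hg_poly (j : κ) : ∃ p : MvPolynomial ι F, MvPolynomial.aeval x p = g j := by
    simpa [Algebra.adjoin_range_eq_range_aeval] using (g j).2
  choose p hp using hg_poly
  let P : MvPolynomial ι A := ∑ j ∈ t,
    MvPolynomial.C ⟨v j, mem_algebraicClosure_iff.2 (hv j)⟩ * (p j).map (algebraMap F A)
  have hP : P = 0 := hxA <| by
    simp only [P, map_sum, map_mul, MvPolynomial.aeval_C, MvPolynomial.aeval_map_algebraMap,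
      map_zero, hp]
    simpa [Subalgebra.smul_def, mul_comm] using hg
  have hcoeff (m : ι →₀ ℕ) : (p i).coeff m = 0 := by
    have := congrArg (fun P => ((P.coeff m : A) : K)) hP
    simp only [P, MvPolynomial.coeff_sum, MvPolynomial.coeff_C_mul, MvPolynomial.coeff_map] at this
    refine linearIndependent_iff'.1 hli t (fun j => (p j).coeff m) ?_ i hi
    simpa [Algebra.smul_def, mul_comm] using this
  have : p i = 0 := MvPolynomial.ext _ _ hcoeff
  exact Subtype.ext (by simp [← hp i, this])

theorem AlgebraicIndependent.linearIndependent_adjoin {ι κ F K : Type*} [Field F]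
    [Field K] [Algebra F K] {x : ι → K} (hx : AlgebraicIndependent F x) {v : κ → K}
    (hv : ∀ i, IsAlgebraic F (v i)) (hli : LinearIndependent F v) :
    LinearIndependent (adjoin F (Set.range x)) v := by
  open algebraAdjoinAdjoin in
  exact (LinearIndependent.iff_fractionRing (Algebra.adjoin F (Set.range x)) _).1
    (hx.linearIndependent_algebraAdjoin hv hli)

theorem finiteDimensional_algebraicClosure_of_fg {F K : Type*} [Field F] [Field K]
    [Algebra F K] (hfg : (⊤ : IntermediateField F K).FG) :
    FiniteDimensional F (algebraicClosure F K) := by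
  have := fg_top_iff.1 hfg
  obtain ⟨s, hs⟩ := exists_finset_isTranscendenceBasis F K
  set E := adjoin F (Set.range ((↑) : s → K))
  have := hs.isAlgebraic_field
  have : Algebra.EssFiniteType E K := .of_comp F E K
  have : Module.Finite E K := Algebra.finite_of_essFiniteType_of_isAlgebraic
  let b := Module.Free.chooseBasis F (algebraicClosure F K)
  have hli : LinearIndependent E fun i => (b i : K) :=
    hs.1.linearIndependent_adjoin (fun i => mem_algebraicClosure_iff.1 (b i).2)
      (b.linearIndependent.map' (algebraicClosure F K).val.toLinearMap
        (LinearMap.ker_eq_bot_of_injective (algebraicClosure F K).val.injective))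
  have := hli.finite
  exact Module.Finite.of_basis b

namespace LaurentSeries

@[simp]
theorem mapRingHom_coeff {R S : Type*} [CommRing R] [CommRing S] (φ : R →+* S)
    (x : LaurentSeries R) (n : ℤ) : (mapRingHom φ x).coeff n = φ (x.coeff n) :=
  rfl

theorem mapRingHom_injective {R S : Type*} [CommRing R] [CommRing S] {φ : R →+* S}
    (hφ : Function.Injective φ) : Function.Injective (mapRingHom φ) := fun x y hxy => by
  ext n
  exact hφ (congrArg (HahnSeries.coeff · n) hxy)

theorem coeff_mul_of_le_order_add_order {R : Type*} [CommRing R] [NoZeroDivisors R]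
    {x y : LaurentSeries R} {e : ℤ} (he : e ≤ x.order + y.order) :
    (x * y).coeff e = x.coeff (e - y.order) * y.leadingCoeff := by
  by_cases hx : x = 0
  · simp [hx]
  by_cases hy : y = 0
  · simp [hy]
  rcases he.lt_or_eq with he | rfl
  · rw [HahnSeries.coeff_eq_zero_of_lt_order (by rwa [HahnSeries.order_mul hx hy]),
      HahnSeries.coeff_eq_zero_of_lt_order (by linarith), zero_mul]
  · rw [HahnSeries.coeff_mul_order_add_order, add_sub_cancel_right, HahnSeries.leadingCoeff_eq]

theorem leadingCoeff_pow {R : Type*} [CommRing R] [NoZeroDivisors R] (x : LaurentSeries R)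
    (n : ℕ) : (x ^ n).leadingCoeff = x.leadingCoeff ^ n := by
  induction n with
  | zero => simp
  | succ n ih => simp [pow_succ, ih]

theorem leadingCoeff_sub_truncLT {R : Type*} [CommRing R] {f : LaurentSeries R} {m : ℤ}
    (hm : f.coeff m ≠ 0) : (f - HahnSeries.truncLT m f).leadingCoeff = f.coeff m := by
  have hcoeff (k : ℤ) :
      (f - HahnSeries.truncLT m f).coeff k = if k < m then 0 else f.coeff k := by
    rw [HahnSeries.coeff_sub, HahnSeries.coeff_truncLT]
    split_ifs <;> simp
  have hm' : (f - HahnSeries.truncLT m f).coeff m ≠ 0 := by simpa [hcoeff] using hm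
  have horder : (f - HahnSeries.truncLT m f).order = m :=
    le_antisymm (HahnSeries.order_le_of_coeff_ne_zero hm')
      ((HahnSeries.le_order_iff_forall (HahnSeries.ne_zero_of_coeff_ne_zero hm')).2
        fun k hk => by simp [hcoeff, hk])
  rw [HahnSeries.leadingCoeff_eq, horder, hcoeff, if_neg (lt_irrefl m)]

/-- Not a global instance: for `R = S` it would form a diamond with `Algebra.id`. -/
noncomputable abbrev mapAlgebra (R S : Type*) [CommRing R] [CommRing S] [Algebra R S] :
    Algebra (LaurentSeries R) (LaurentSeries S) :=
  (mapRingHom (algebraMap R S)).toAlgebra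

attribute [local instance] mapAlgebra

theorem finite_mapAlgebra (R S : Type*) [CommRing R] [CommRing S] [Algebra R S]
    [Module.Free R S] [Module.Finite R S] :
    Module.Finite (LaurentSeries R) (LaurentSeries S) := by
  classical
  let b := Module.Free.chooseBasis R S
  refine ⟨⟨Finset.univ.image fun i => HahnSeries.C (b i), eq_top_iff.2 fun h _ => ?_⟩⟩
  have hdecomp : h = ∑ i, h.map (b.coord i) • HahnSeries.C (b i) := by
    ext n
    simp only [HahnSeries.coeff_sum, Algebra.smul_def, RingHom.algebraMap_toAlgebra,
      HahnSeries.C_apply, HahnSeries.coeff_mul_single_zero, mapRingHom_coeff]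
    change h.coeff n = ∑ i, algebraMap R S (b.coord i (h.coeff n)) * b i
    simp only [← Algebra.smul_def, Module.Basis.coord_apply, b.sum_repr]
  rw [hdecomp]
  exact Submodule.sum_mem _ fun i _ => Submodule.smul_mem _ _ (Submodule.subset_span (by simp))

variable {L K : Type*} [Field L] [Field K] [Algebra L K]

theorem isAlgebraic_of_coeff_mem {E : IntermediateField L K} [FiniteDimensional L E]
    {f : LaurentSeries K} (hf : ∀ n, f.coeff n ∈ E) : IsAlgebraic (LaurentSeries L) f := by
  let f' : LaurentSeries E :=
    ⟨fun n => ⟨f.coeff n, hf n⟩, f.isPWO_support.mono fun n hn h0 => hn (Subtype.ext h0)⟩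
  have := finite_mapAlgebra L E
  let ι : LaurentSeries E →ₐ[LaurentSeries L] LaurentSeries K :=
    { mapRingHom (algebraMap E K) with commutes' := fun _ => rfl }
  exact ((IsIntegral.of_finite (LaurentSeries L) f').map ι).isAlgebraic

theorem isAlgebraic_truncLT {f : LaurentSeries K} {m : ℤ}
    (hf : ∀ k < m, IsAlgebraic L (f.coeff k)) :
    IsAlgebraic (LaurentSeries L) (HahnSeries.truncLT m f) := by
  let E := adjoin L (f.coeff '' Set.Ico f.order m)
  have : Finite (f.coeff '' Set.Ico f.order m) := ((Set.finite_Ico _ _).image _).to_subtype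
  have : FiniteDimensional L E := finiteDimensional_adjoin <| by
    rintro _ ⟨k, hk, rfl⟩
    exact (hf k hk.2).isIntegral
  refine isAlgebraic_of_coeff_mem (E := E) fun k => ?_
  rw [HahnSeries.coeff_truncLT]
  split_ifs with hkm
  · rcases lt_or_ge k f.order with hk | hk
    · rw [HahnSeries.coeff_eq_zero_of_lt_order hk]
      exact E.zero_mem
    · exact subset_adjoin _ _ ⟨k, ⟨hk, hkm⟩, rfl⟩
  · exact E.zero_mem

theorem isAlgebraic_leadingCoeff {f : LaurentSeries K} (hf : IsAlgebraic (LaurentSeries L) f) :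
    IsAlgebraic L f.leadingCoeff := by
  rcases eq_or_ne f 0 with rfl | hf0
  · simpa using isAlgebraic_zero
  obtain ⟨p, hp, hroot⟩ := hf
  set φ := mapRingHom (algebraMap L K)
  obtain ⟨i₀, hi₀, hmin⟩ := p.support.exists_min_image
    (fun i => (φ (p.coeff i)).order + i • f.order) (Polynomial.support_nonempty.2 hp)
  set e := (φ (p.coeff i₀)).order + i₀ • f.order
  let c (i : ℕ) : L := (p.coeff i).coeff (e - i • f.order)
  have hterm (i : ℕ) (hi : i ∈ p.support) :
      (φ (p.coeff i) * f ^ i).coeff e = algebraMap L K (c i) * f.leadingCoeff ^ i := by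
    rw [coeff_mul_of_le_order_add_order (by simpa using hmin i hi), HahnSeries.order_pow,
      leadingCoeff_pow]
    rfl
  have hc : c i₀ ≠ 0 := by
    have hlead : algebraMap L K (c i₀) = (φ (p.coeff i₀)).leadingCoeff := by
      rw [HahnSeries.leadingCoeff_eq]
      exact congrArg (φ (p.coeff i₀)).coeff (add_sub_cancel_right _ _)
    have hne : φ (p.coeff i₀) ≠ 0 :=
      (map_ne_zero_iff φ (mapRingHom_injective (algebraMap L K).injective)).2
        (Polynomial.mem_support_iff.1 hi₀)
    intro h
    rw [h, map_zero, eq_comm, HahnSeries.leadingCoeff_eq_zero] at hlead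
    exact hne hlead
  let q : Polynomial L := ∑ i ∈ p.support, Polynomial.monomial i (c i)
  refine ⟨q, fun hq => hc ?_, ?_⟩
  · simpa [q, Polynomial.finsetSum_coeff, Polynomial.coeff_monomial, hi₀] using
      congrArg (Polynomial.coeff · i₀) hq
  · have := congrArg (HahnSeries.coeff · e) hroot
    simp only [Polynomial.aeval_def, RingHom.algebraMap_toAlgebra, Polynomial.eval₂_eq_sum,
      Polynomial.sum_def, HahnSeries.coeff_sum] at this
    simp only [q, map_sum, Polynomial.aeval_monomial]
    rw [← Finset.sum_congr rfl hterm]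
    exact this

theorem isAlgebraic_coeff_of_isAlgebraic {f : LaurentSeries K}
    (hf : IsAlgebraic (LaurentSeries L) f) (n : ℤ) : IsAlgebraic L (f.coeff n) := by
  by_contra hn
  let S := {k | ¬IsAlgebraic L (f.coeff k)}
  have hS : S.IsWF := f.isWF_support.mono fun k hk h0 => hk (h0 ▸ isAlgebraic_zero)
  set m := hS.min ⟨n, hn⟩
  have hm : ¬IsAlgebraic L (f.coeff m) := hS.min_mem ⟨n, hn⟩
  have hbelow (k : ℤ) (hk : k < m) : IsAlgebraic L (f.coeff k) :=
    by_contra fun h => hS.not_lt_min ⟨n, hn⟩ h hk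
  have hsub := hf.sub (isAlgebraic_truncLT hbelow)
  rw [← leadingCoeff_sub_truncLT fun h0 => hm (h0 ▸ isAlgebraic_zero)] at hm
  exact hm (isAlgebraic_leadingCoeff hsub)

end LaurentSeries

/-- Let `K/L` be a finitely generated field extension.  Then the relative
algebraic closure of `L((t))` in `K((t))` equals `L̃((t))`, where `L̃` is the relative
algebraic closure of `L` in `K`: an element `f ∈ K((t))` is algebraic over `L((t))` if and
only if all of its coefficients are algebraic over `L`. -/
theorem laurentSeries_isAlgebraic_iff_coeff_isAlgebraic
    {L K : Type*} [Field L] [Field K] [Algebra L K]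
    (hfg : (⊤ : IntermediateField L K).FG) (f : LaurentSeries K) :
    (∃ p : Polynomial (LaurentSeries L), p ≠ 0 ∧
        Polynomial.eval₂ (LaurentSeries.mapRingHom (algebraMap L K)) f p = 0)
      ↔ ∀ n : ℤ, IsAlgebraic L (f.coeff n) := by
  let _ := LaurentSeries.mapAlgebra L K
  change IsAlgebraic (LaurentSeries L) f ↔ _
  refine ⟨LaurentSeries.isAlgebraic_coeff_of_isAlgebraic, fun hf => ?_⟩
  have := finiteDimensional_algebraicClosure_of_fg hfg
  exact LaurentSeries.isAlgebraic_of_coeff_mem (E := algebraicClosure L K)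
    fun n => mem_algebraicClosure_iff.2 (hf n)
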